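/- arXiv:2111.05888 — 3 statements merged into one kernel-verified Lean document; each statement's English description precedes it below -/
import Mathlib

section
/- Let 𝐏 be a p-toral group with maximal torus 𝐓, and let T_p denote the subgroup of p-torsion elements of 𝐓. Then every p-discretization of 𝐏 contains T_p. -/
/-!
The `p`-power torsion `T_p` of the maximal torus `𝐓 ≅ (S¹)^r` is a normal discrete `p`-torus
`(ℤ/p^∞)^r` of `𝐏`. It contains every discrete `p`-torus `S` of `𝐏`: `S` is `p`-divisible, so its
image in the finite `p`-group `𝐏/𝐓` is trivial, and `S` is `p`-power torsion. Hence if `P` is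
discrete `p`-toral with torus `S`, then `P T_p` is discrete `p`-toral with torus `T_p`, its quotient
`P T_p / T_p ≅ P / (P ∩ T_p)` being a quotient of `P / S`; maximality of `P` forces `T_p ≤ P`.
-/

open scoped Pointwise
open CategoryTheory

noncomputable section

/-- The Prüfer `p`-group `ℤ/p^∞`, realized as the subgroup of the circle group
consisting of the elements of `p`-power order. -/
def PruferGroup (p : ℕ) : Subgroup Circle where
  carrier := {x | ∃ n : ℕ, x ^ p ^ n = 1}
  one_mem' := ⟨0, one_pow _⟩
  mul_mem' := by
    rintro a b ⟨n, hn⟩ ⟨m, hm⟩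
    refine ⟨n + m, ?_⟩
    rw [mul_pow, pow_add, pow_mul, hn, one_pow, one_mul, mul_comm (p ^ n), pow_mul, hm, one_pow]
  inv_mem' := by
    rintro a ⟨n, hn⟩
    exact ⟨n, by rw [inv_pow, hn, inv_one]⟩

/-- A group is a discrete `p`-torus of rank `r` if it is isomorphic to `(ℤ/p^∞)^r`. -/
def IsDiscretePTorusOfRank (p r : ℕ) (T : Type*) [Group T] : Prop :=
  Nonempty (T ≃* (Fin r → PruferGroup p))

/-- A group is discrete `p`-toral (of rank `r`, for some `r`) if it is an extension of a
discrete `p`-torus of rank `r` by a finite `p`-group. -/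
def IsDiscretePToral (p : ℕ) (P : Type*) [Group P] : Prop :=
  ∃ (r : ℕ) (T : Subgroup P) (hT : T.Normal),
    IsDiscretePTorusOfRank p r T ∧
    (letI := hT; Finite (P ⧸ T) ∧ IsPGroup p (P ⧸ T))

/-- A topological group is a (continuous) torus of rank `r` if it is isomorphic, as a
topological group, to `(S¹)^r`. -/
def IsTorusOfRank (r : ℕ) (T : Type*) [Group T] [TopologicalSpace T] : Prop :=
  ∃ e : T ≃* (Fin r → Circle), Continuous e ∧ Continuous e.symm

/-- A topological group is `p`-toral of rank `r` if it is a compact group which is an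
extension of a torus of rank `r` (its identity component, the maximal torus) by a
finite `p`-group. -/
def IsPToral (p : ℕ) (P : Type*) [Group P] [TopologicalSpace P] [IsTopologicalGroup P] : Prop :=
  CompactSpace P ∧
    ∃ r : ℕ, IsTorusOfRank r (Subgroup.connectedComponentOfOne P) ∧
      ∃ hN : (Subgroup.connectedComponentOfOne P).Normal,
        letI := hN
        Finite (P ⧸ Subgroup.connectedComponentOfOne P) ∧
          IsPGroup p (P ⧸ Subgroup.connectedComponentOfOne P)

/-- `P` is a maximal discrete `p`-toral subgroup of the subgroup `B`: it is a discrete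
`p`-toral subgroup contained in `B`, maximal among discrete `p`-toral subgroups of `B`. -/
def IsMaxDiscretePToralIn (p : ℕ) {G : Type*} [Group G] (P B : Subgroup G) : Prop :=
  P ≤ B ∧ IsDiscretePToral p P ∧
    ∀ Q : Subgroup G, Q ≤ B → IsDiscretePToral p Q → P ≤ Q → Q = P

/-- `P` is a maximal discrete `p`-toral subgroup of `G`. -/
def IsMaxDiscretePToral (p : ℕ) {G : Type*} [Group G] (P : Subgroup G) : Prop :=
  IsMaxDiscretePToralIn p P ⊤

/-- The image of a subgroup under the conjugation `c_g(x) = g⁻¹ x g`. -/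
def conjSubgroup {G : Type*} [Group G] (g : G) (P : Subgroup G) : Subgroup G :=
  Subgroup.map ((MulAut.conj g⁻¹).toMonoidHom) P

theorem PruferGroup.isPGroup (p : ℕ) : IsPGroup p (PruferGroup p) := fun x => by
  obtain ⟨n, hn⟩ := x.2
  exact ⟨n, Subtype.ext hn⟩

theorem PruferGroup.exists_pow_eq {p : ℕ} (hp : p ≠ 0) (k : ℕ) (x : PruferGroup p) :
    ∃ y : PruferGroup p, y ^ p ^ k = x := by
  obtain ⟨n, hn⟩ := x.2
  set y : Circle := Circle.exp (Complex.arg x / (p ^ k : ℕ))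
  have hy : y ^ p ^ k = x := by
    rw [← Circle.exp_natCast_mul, mul_div_cancel₀ _ (by positivity), Circle.exp_arg]
  exact ⟨⟨y, k + n, by rw [pow_add, pow_mul, hy, hn]⟩, Subtype.ext hy⟩

theorem IsPGroup.pi {p : ℕ} {ι : Type*} [Finite ι] {G : ι → Type*} [∀ i, Group (G i)]
    (hG : ∀ i, IsPGroup p (G i)) : IsPGroup p (∀ i, G i) := fun g => by
  have := Fintype.ofFinite ι
  choose k hk using fun i => hG i (g i)
  refine ⟨Finset.univ.sup k, funext fun i => ?_⟩
  rw [Pi.pow_apply, Pi.one_apply, ← orderOf_dvd_iff_pow_eq_one]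
  exact (orderOf_dvd_of_pow_eq_one (hk i)).trans
    (Nat.pow_dvd_pow p (Finset.le_sup (Finset.mem_univ i)))

namespace IsDiscretePTorusOfRank

variable {p r : ℕ} {T : Type*} [Group T]

theorem of_mulEquiv {T' : Type*} [Group T'] (hT : IsDiscretePTorusOfRank p r T) (e : T ≃* T') :
    IsDiscretePTorusOfRank p r T' :=
  hT.map e.symm.trans

theorem isPGroup (hT : IsDiscretePTorusOfRank p r T) : IsPGroup p T :=
  (IsPGroup.pi fun _ => PruferGroup.isPGroup p).of_equiv hT.some.symm

theorem exists_pow_eq (hT : IsDiscretePTorusOfRank p r T) (hp : p ≠ 0) (k : ℕ) (t : T) :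
    ∃ u : T, u ^ p ^ k = t := by
  obtain ⟨e⟩ := hT
  choose f hf using fun i => PruferGroup.exists_pow_eq hp k (e t i)
  refine ⟨e.symm f, e.injective ?_⟩
  rw [map_pow, e.apply_symm_apply]
  exact funext hf

theorem le_of_isPGroup_quotient [Fact p.Prime] {G : Type*} [Group G] {T K : Subgroup G}
    [K.Normal] [Finite (G ⧸ K)] (hK : IsPGroup p (G ⧸ K)) (hT : IsDiscretePTorusOfRank p r T) :
    T ≤ K := by
  intro t ht
  obtain ⟨N, hN⟩ := IsPGroup.iff_card.mp hK
  obtain ⟨u, hu⟩ := hT.exists_pow_eq (Fact.out : p.Prime).ne_zero N ⟨t, ht⟩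
  rw [← QuotientGroup.eq_one_iff, show t = ((u ^ p ^ N : T) : G) from congrArg Subtype.val hu.symm,
    Subgroup.coe_pow, QuotientGroup.mk_pow, ← hN, pow_card_eq_one']

end IsDiscretePTorusOfRank

theorem exists_isDiscretePTorusOfRank_of_mulEquiv_circle {G : Type*} [Group G] (p : ℕ)
    {H : Subgroup G} {r : ℕ} (e : H ≃* (Fin r → Circle)) :
    ∃ A : Subgroup G, IsDiscretePTorusOfRank p r A ∧
      ∀ x, x ∈ A ↔ x ∈ H ∧ ∃ n : ℕ, x ^ p ^ n = 1 := by
  set φ : (Fin r → PruferGroup p) →* G :=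
    H.subtype.comp (e.symm.toMonoidHom.comp ((PruferGroup p).subtype.compLeft (Fin r)))
  have hφ : Function.Injective φ :=
    H.subtype_injective.comp (e.symm.injective.comp Subtype.val_injective.comp_left)
  refine ⟨φ.range, ⟨(MonoidHom.ofInjective hφ).symm⟩, fun x => ⟨?_, ?_⟩⟩
  · rintro ⟨f, rfl⟩
    obtain ⟨n, hn⟩ := IsPGroup.pi (fun _ => PruferGroup.isPGroup p) f
    exact ⟨(e.symm _).2, n, by rw [← map_pow, hn, map_one]⟩
  · rintro ⟨hx, n, hn⟩
    have hpow : e ⟨x, hx⟩ ^ p ^ n = 1 := by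
      rw [← map_pow, map_eq_one_iff _ e.injective]
      exact Subtype.ext hn
    refine ⟨fun i => ⟨e ⟨x, hx⟩ i, n, congrFun hpow i⟩, ?_⟩
    change ((e.symm (e ⟨x, hx⟩) : H) : G) = x
    rw [e.symm_apply_apply]

theorem IsDiscretePToral.sup_of_normal {p r : ℕ} {G : Type*} [Group G] {P A : Subgroup G}
    [A.Normal] (hP : IsDiscretePToral p P) (hA : IsDiscretePTorusOfRank p r A)
    (le_A : ∀ s (T : Subgroup G), IsDiscretePTorusOfRank p s T → T ≤ A) :
    IsDiscretePToral p ↥(P ⊔ A) := by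
  obtain ⟨s, T, hT, hTtorus, hfin, hpgrp⟩ := hP
  have hTA : T ≤ A.subgroupOf P := fun t ht =>
    le_A s (T.map P.subtype) (hTtorus.of_mulEquiv (T.equivMapOfInjective _ P.subtype_injective))
      ⟨t, ht, rfl⟩
  have hsurj := QuotientGroup.map_surjective_of_surjective T (A.subgroupOf P) (MonoidHom.id P)
    QuotientGroup.mk_surjective hTA
  let e := QuotientGroup.quotientInfEquivProdNormalQuotient P A
  exact ⟨r, A.subgroupOf (P ⊔ A), inferInstance,
    hA.of_mulEquiv (Subgroup.subgroupOfEquivOfLe le_sup_right).symm,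
    @Finite.of_equiv _ _ (Finite.of_surjective _ hsurj) e.toEquiv,
    (hpgrp.of_surjective _ hsurj).of_equiv e⟩

theorem IsMaxDiscretePToral.le_of_normal {p r : ℕ} {G : Type*} [Group G] {P A : Subgroup G}
    [A.Normal] (hP : IsMaxDiscretePToral p P) (hA : IsDiscretePTorusOfRank p r A)
    (le_A : ∀ s (T : Subgroup G), IsDiscretePTorusOfRank p s T → T ≤ A) : A ≤ P :=
  hP.2.2 (P ⊔ A) le_top (hP.2.1.sup_of_normal hA le_A) le_sup_left ▸ le_sup_right

/-- Let `𝐏` be a `p`-toral group with maximal torus `𝐓` (its identity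
component) and let `T_p` be the subgroup of `p`-torsion elements of `𝐓`.  Then every
`p`-discretization of `𝐏` (i.e. every maximal discrete `p`-toral subgroup of `𝐏`)
contains `T_p`. -/
theorem pDiscretization_contains_torus_p_torsion (p : ℕ) [Fact p.Prime]
    (Pbold : Type*) [Group Pbold] [TopologicalSpace Pbold] [IsTopologicalGroup Pbold]
    (hPbold : IsPToral p Pbold)
    (P : Subgroup Pbold) (hP : IsMaxDiscretePToral p P) :
    ∀ x ∈ Subgroup.connectedComponentOfOne Pbold, (∃ n : ℕ, x ^ p ^ n = 1) → x ∈ P := by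
  obtain ⟨-, r, ⟨e, -, -⟩, hT, hfin, hpgrp⟩ := hPbold
  obtain ⟨Tp, hTp, mem_Tp⟩ := exists_isDiscretePTorusOfRank_of_mulEquiv_circle p e
  have : Tp.Normal := ⟨fun x hx g => by
    obtain ⟨hxT, n, hn⟩ := (mem_Tp x).1 hx
    exact (mem_Tp _).2 ⟨hT.conj_mem x hxT g, n, by rw [conj_pow, hn, mul_one, mul_inv_cancel]⟩⟩
  have le_Tp : ∀ s (S : Subgroup Pbold), IsDiscretePTorusOfRank p s S → S ≤ Tp :=
    fun s S hS x hx => by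
      obtain ⟨n, hn⟩ := hS.isPGroup ⟨x, hx⟩
      exact (mem_Tp x).2 ⟨hS.le_of_isPGroup_quotient hpgrp hx, n, congrArg Subtype.val hn⟩
  exact fun x hx hxn => hP.le_of_normal hTp le_Tp ((mem_Tp x).2 ⟨hx, hxn⟩)

end
end

section
/- Let K be a finite group and let 0 → I → X → V → 0 be a short exact sequence of ℤ[K]-modules. If V is uniquely |K|-divisible (multiplication by |K| is bijective on V) and I is an injective ℤ-module, then the sequence splits, i.e., X ≅ I × V as ℤ[K]-modules. -/
/-!
Since `I` is an injective abelian group, `f` has an additive retraction, so `g` has an additive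
section `s₀`. Summing the conjugates `k⁻¹ • s₀ (k • ·)` over `k ∈ K` gives a `ℤ[K]`-linear map
`t` with `g ∘ t = |K|`. As `|K|` acts bijectively on `V`, `t ∘ |K|⁻¹` is a `ℤ[K]`-linear section
of `g`, and a split short exact sequence has middle term `I × V`.
-/

open MonoidAlgebra

universe u

theorem Function.Exact.exists_comp_eq_id_of_moduleInjective {R N P : Type*} {M : Type u} [Ring R]
    [Small.{u} R] [AddCommGroup M] [AddCommGroup N] [AddCommGroup P]
    [Module R M] [Module R N] [Module R P] [Module.Injective R M]
    {f : M →ₗ[R] N} {g : N →ₗ[R] P}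
    (h : Function.Exact f g) (hf : Function.Injective f) (hg : Function.Surjective g) :
    ∃ l : P →ₗ[R] N, g ∘ₗ l = .id := by
  obtain ⟨r, hr⟩ := Module.Injective.extension_property R M M N f hf .id
  exact ⟨_, (h.splitSurjectiveEquiv hf |>.symm (h.splitInjectiveEquiv hg ⟨r, hr⟩)).2⟩

section Averaging

variable {k G V W : Type*} [CommRing k] [Group G] [Fintype G]
  [AddCommGroup V] [Module k V] [Module k[G] V] [IsScalarTower k k[G] V]
  [AddCommGroup W] [Module k W] [Module k[G] W] [IsScalarTower k k[G] W]

theorem LinearMap.apply_sumOfConjugatesEquivariant_of_rightInverse (p : W →ₗ[k[G]] V)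
    (s : V →ₗ[k] W) (hs : ∀ v, p (s v) = v) (v : V) :
    p (s.sumOfConjugatesEquivariant G v) = Nat.card G • v := by
  have hconj : ∀ h : G, p (s.conjugate h v) = v := fun h => by
    rw [conjugate_apply, p.map_smul, hs, smul_smul, single_mul_single, mul_one, inv_mul_cancel,
      ← one_def, one_smul]
  rw [sumOfConjugatesEquivariant_apply, map_sum]
  simp only [hconj, Finset.sum_const, Finset.card_univ, Fintype.card_eq_nat_card]

theorem MonoidAlgebra.exists_equivariant_section_of_bijective_card_smul (p : W →ₗ[k[G]] V)
    (s : V →ₗ[k] W) (hs : ∀ v, p (s v) = v)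
    (hV : Function.Bijective fun v : V => Nat.card G • v) :
    ∃ s' : V →ₗ[k[G]] W, p ∘ₗ s' = .id := by
  let e : V ≃ₗ[k[G]] V := .ofBijective (Nat.card G • LinearMap.id) hV
  refine ⟨s.sumOfConjugatesEquivariant G ∘ₗ e.symm, LinearMap.ext fun v => ?_⟩
  rw [LinearMap.comp_apply, LinearMap.comp_apply,
    LinearMap.apply_sumOfConjugatesEquivariant_of_rightInverse p s hs]
  exact e.apply_symm_apply v

end Averaging

/-- Let `K` be a finite group and `0 → I → X → V → 0` a short exact
sequence of `ℤ[K]`-modules.  If `V` is uniquely `|K|`-divisible and `I` is an injective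
`ℤ`-module, then the sequence splits: `X ≅ I × V` as `ℤ[K]`-modules. -/
theorem splitting_of_ZK_mod (K : Type*) [Group K] [Finite K]
    (I X V : Type*) [AddCommGroup I] [AddCommGroup X] [AddCommGroup V]
    [Module (MonoidAlgebra ℤ K) I] [Module (MonoidAlgebra ℤ K) X]
    [Module (MonoidAlgebra ℤ K) V]
    (f : I →ₗ[MonoidAlgebra ℤ K] X) (g : X →ₗ[MonoidAlgebra ℤ K] V)
    (hf : Function.Injective f) (hg : Function.Surjective g)
    (hexact : LinearMap.range f = LinearMap.ker g)
    (hV : Function.Bijective fun v : V => (Nat.card K : ℤ) • v)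
    (hI : Module.Injective ℤ I) :
    (∃ s : V →ₗ[MonoidAlgebra ℤ K] X, g.comp s = LinearMap.id) ∧
      Nonempty ((I × V) ≃ₗ[MonoidAlgebra ℤ K] X) := by
  have := Fintype.ofFinite K
  have hfg : Function.Exact f g := LinearMap.exact_iff.mpr hexact.symm
  obtain ⟨s₀, hs₀⟩ := Function.Exact.exists_comp_eq_id_of_moduleInjective
    (f := f.restrictScalars ℤ) (g := g.restrictScalars ℤ) hfg hf hg
  obtain ⟨s, hs⟩ := exists_equivariant_section_of_bijective_card_smul g s₀
    (LinearMap.congr_fun hs₀) (by simpa only [natCast_zsmul] using hV)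
  exact ⟨⟨s, hs⟩, ⟨(hfg.splitSurjectiveEquiv hf ⟨s, hs⟩).1.symm⟩⟩
end

section
/- Let 𝐏 be a p-toral group and let P₁ and P₂ be p-discretizations of 𝐏. If Q is a subgroup with Q ⊆ P₁ ∩ P₂, then there exists 𝐲 ∈ C_𝐏(Q) such that c_𝐲(P₁) = P₂. In particular the pair (Q, P₁) is conjugate in 𝐏 to the pair (Q, P₂) by an element fixing Q pointwise. -/
/-!
Let `T` be the identity component of `𝐏`, `T∞ ≅ (ℤ/p^∞)^r` its `p`-torsion, `W = 𝐏/T∞` and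
`V = T/T∞ ⊴ W`. As `T` is divisible, `V` is abelian and uniquely `p`-divisible, while
`W/V ≅ 𝐏/T` is a finite `p`-group. Averaging over a finite `p`-group kills 1- and 2-cocycles
with values in `V`: hence `V` has a complement in `W`, and two complements are conjugate by an
element of `V` centralizing their intersection. The discrete `p`-toral subgroups of `𝐏`
containing `T∞` are the preimages of the finite `p`-subgroups of `W`, so the `p`-discretizations
are the preimages of the complements of `V`. The element of `V` conjugating `P₁/T∞` to `P₂/T∞`
centralizes the image of `Q`; lifting its `|Q/(Q ∩ T)|`-th root to `T` and taking the norm over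
`Q/(Q ∩ T)` gives the required `𝐲 ∈ C_𝐏(Q)`.
-/

open scoped Pointwise
open CategoryTheory

noncomputable section

open scoped IsMulCommutative

section Cocycle

variable {Γ A : Type*} [Group Γ] [CommGroup A] (φ : Γ → A →* A)

theorem pow_card_mul_map_prod_of_cocycle₁ [Fintype Γ] {f : Γ → A}
    (hf : ∀ g h, f (g * h) = φ g (f h) * f g) (g : Γ) :
    f g ^ Fintype.card Γ * φ g (∏ h, f h) = ∏ h, f h :=
  calc f g ^ Fintype.card Γ * φ g (∏ h, f h) = ∏ h, f (g * h) := by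
        simp only [hf, Finset.prod_mul_distrib, map_prod, Finset.prod_const, Finset.card_univ,
          mul_comm]
    _ = ∏ h, f h := Equiv.prod_comp (Equiv.mulLeft g) f

theorem exists_eq_inv_map_mul_of_cocycle₁ [Finite Γ]
    (hA : Function.Bijective fun a : A => a ^ Nat.card Γ) {f : Γ → A}
    (hf : ∀ g h, f (g * h) = φ g (f h) * f g) : ∃ v, ∀ g, f g = (φ g v)⁻¹ * v := by
  have := Fintype.ofFinite Γ
  obtain ⟨v, hv⟩ := hA.2 (∏ h, f h)
  refine ⟨v, fun g => hA.1 ?_⟩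
  simp only [Nat.card_eq_fintype_card] at hv ⊢
  rw [mul_pow, inv_pow, ← map_pow, hv, eq_inv_mul_iff_mul_eq, mul_comm]
  exact pow_card_mul_map_prod_of_cocycle₁ φ hf g

theorem pow_card_mul_prod_of_cocycle₂ [Fintype Γ] {f : Γ → Γ → A}
    (hf : ∀ a b c, f a b * f (a * b) c = φ a (f b c) * f a (b * c)) (a b : Γ) :
    f a b ^ Fintype.card Γ * ∏ c, f (a * b) c = φ a (∏ c, f b c) * ∏ c, f a c :=
  calc f a b ^ Fintype.card Γ * ∏ c, f (a * b) c = ∏ c, f a b * f (a * b) c := by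
        rw [Finset.prod_mul_distrib, Finset.prod_const, Finset.card_univ]
    _ = ∏ c, φ a (f b c) * f a (b * c) := Finset.prod_congr rfl fun c _ => hf a b c
    _ = φ a (∏ c, f b c) * ∏ c, f a c := by
        rw [Finset.prod_mul_distrib, map_prod]
        exact congrArg (_ * ·) (Equiv.prod_comp (Equiv.mulLeft b) (f a))

theorem exists_eq_map_mul_div_of_cocycle₂ [Finite Γ]
    (hA : Function.Bijective fun a : A => a ^ Nat.card Γ) {f : Γ → Γ → A}
    (hf : ∀ a b c, f a b * f (a * b) c = φ a (f b c) * f a (b * c)) :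
    ∃ β : Γ → A, ∀ a b, f a b = φ a (β b) * β a / β (a * b) := by
  have := Fintype.ofFinite Γ
  choose β hβ using fun a => hA.2 (∏ c, f a c)
  refine ⟨β, fun a b => hA.1 ?_⟩
  simp only [Nat.card_eq_fintype_card] at hβ ⊢
  rw [div_pow, mul_pow, ← map_pow, hβ, hβ, hβ, eq_div_iff_mul_eq']
  exact pow_card_mul_prod_of_cocycle₂ φ hf a b

end Cocycle

theorem bijective_pow_card_of_isPGroup {p : ℕ} [Fact p.Prime] {A : Type*} [Monoid A]
    (hA : Function.Bijective fun a : A => a ^ p) {K : Type*} [Group K] [Finite K]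
    (hK : IsPGroup p K) : Function.Bijective fun a : A => a ^ Nat.card K := by
  obtain ⟨k, hk⟩ := IsPGroup.iff_card.1 hK
  rw [hk, ← pow_iterate]
  exact hA.iterate k

theorem IsPGroup.disjoint_of_injective_pow {p : ℕ} {G : Type*} [Group G] {K V : Subgroup G}
    (hK : IsPGroup p K) (hV : Function.Injective fun v : V => v ^ p) : Disjoint K V := by
  rw [Subgroup.disjoint_def]
  intro x hxK hxV
  obtain ⟨k, hk⟩ := hK ⟨x, hxK⟩
  have hinj := hV.iterate k
  rw [pow_iterate] at hinj
  exact congrArg Subtype.val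
    (@hinj ⟨x, hxV⟩ 1 (Subtype.ext (by simpa using congrArg Subtype.val hk)))

theorem conjSubgroup_eq_smul {G : Type*} [Group G] (g : G) (P : Subgroup G) :
    conjSubgroup g P = MulAut.conj g⁻¹ • P :=
  rfl

theorem Subgroup.comap_conj_smul {G H : Type*} [Group G] [Group H] (f : G →* H) (g : G)
    (S : Subgroup H) : (MulAut.conj (f g) • S).comap f = MulAut.conj g • S.comap f := by
  ext x
  simp [Subgroup.mem_pointwise_smul_iff_inv_smul_mem]

def QuotientGroup.subgroupOfEquivMapMk {G : Type*} [Group G] (N P : Subgroup G) [N.Normal] :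
    P ⧸ N.subgroupOf P ≃* P.map (QuotientGroup.mk' N) :=
  (QuotientGroup.quotientMulEquivOfEq
      (by rw [Subgroup.ker_subgroupMap, QuotientGroup.ker_mk'])).trans
    (QuotientGroup.quotientKerEquivOfSurjective _ ((QuotientGroup.mk' N).subgroupMap_surjective P))

section Complement

variable {G : Type*} [Group G] {V : Subgroup G} [V.Normal]

theorem isComplement'_range_of_rightInverse {σ : G ⧸ V →* G}
    (hσ : ∀ a, (σ a : G ⧸ V) = a) : σ.range.IsComplement' V := by
  refine Subgroup.isComplement'_of_disjoint_and_mul_eq_univ ?_ ?_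
  · rw [Subgroup.disjoint_def]
    rintro _ ⟨a, rfl⟩ ha
    rw [← hσ a, (QuotientGroup.eq_one_iff _).2 ha, map_one]
  · refine Set.eq_univ_of_forall fun g => ⟨σ g, ⟨g, rfl⟩, (σ g)⁻¹ * g, ?_, mul_inv_cancel_left _ _⟩
    rw [SetLike.mem_coe, ← QuotientGroup.eq]
    exact hσ g

theorem exists_isComplement'_of_bijective_pow [IsMulCommutative V] [Finite (G ⧸ V)]
    (hV : Function.Bijective fun v : V => v ^ Nat.card (G ⧸ V)) :
    ∃ H : Subgroup G, H.IsComplement' V := by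
  let s : G ⧸ V → G := Quotient.out
  have hs (a : G ⧸ V) : (s a : G ⧸ V) = a := QuotientGroup.out_eq' a
  have hf (a b : G ⧸ V) : s a * s b * (s (a * b))⁻¹ ∈ V := by
    rw [← QuotientGroup.eq_one_iff]
    simp [hs]
  -- the factor set of the set-theoretic section `s` is a 2-cocycle, hence a coboundary
  obtain ⟨β, hβ⟩ := exists_eq_map_mul_div_of_cocycle₂
    (fun a => (MulAut.conjNormal (s a)).toMonoidHom) hV (f := fun a b => ⟨_, hf a b⟩)
    fun a b c => by
      ext
      simp only [Subgroup.coe_mul, MulEquiv.coe_toMonoidHom, MulAut.conjNormal_apply, mul_assoc]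
      group
  have hσ (a b : G ⧸ V) :
      (β (a * b) : G)⁻¹ * s (a * b) = (β a : G)⁻¹ * s a * ((β b : G)⁻¹ * s b) := by
    have h := congrArg Subtype.val (hβ a b)
    simp only [Subgroup.coe_mul, MulEquiv.coe_toMonoidHom, MulAut.conjNormal_apply,
      div_eq_mul_inv, Subgroup.coe_inv] at h
    rw [mul_inv_eq_iff_eq_mul] at h
    rw [← inv_mul_cancel_left (s a) (s b), h]
    group
  refine ⟨_, isComplement'_range_of_rightInverse
    (σ := MonoidHom.mk' (fun a => (β a : G)⁻¹ * s a) hσ) fun a => ?_⟩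
  rw [MonoidHom.mk'_apply, QuotientGroup.mk_mul, QuotientGroup.mk_inv,
    (QuotientGroup.eq_one_iff _).2 (β a).2, inv_one, one_mul, hs]

theorem exists_monoidHom_mk_eq_iff {H₁ H₂ : Subgroup G} (hsup : H₁ ⊔ V = H₂ ⊔ V)
    (hdisj : Disjoint H₂ V) :
    ∃ M : H₁ →* H₂, ∀ (h : H₁) (m : H₂), ((m : G) : G ⧸ V) = (h : G) ↔ M h = m := by
  set π := QuotientGroup.mk' V
  have hπV : V.map π = ⊥ := QuotientGroup.map_mk'_self V
  have hmap : H₁.map π = H₂.map π := by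
    simpa only [Subgroup.map_sup, hπV, sup_bot_eq] using congrArg (Subgroup.map π) hsup
  have hinj : Function.Injective (π.subgroupMap H₂) := by
    rw [← MonoidHom.ker_eq_bot_iff, Subgroup.ker_subgroupMap, QuotientGroup.ker_mk',
      Subgroup.subgroupOf_eq_bot]
    exact hdisj.symm
  let e₂ : H₂ ≃* H₂.map π := MulEquiv.ofBijective _ ⟨hinj, π.subgroupMap_surjective H₂⟩
  refine ⟨e₂.symm.toMonoidHom.comp
    ((MulEquiv.subgroupCongr hmap).toMonoidHom.comp (π.subgroupMap H₁)), fun h m => ?_⟩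
  refine ⟨fun hm => e₂.symm_apply_eq.2 (Subtype.ext hm.symm), ?_⟩
  rintro rfl
  exact congrArg Subtype.val (e₂.apply_symm_apply _)

theorem exists_mem_centralizer_conj_smul_eq [IsMulCommutative V] {H₁ H₂ : Subgroup G}
    [Finite H₁] (hV : Function.Bijective fun v : V => v ^ Nat.card H₁)
    (hsup : H₁ ⊔ V = H₂ ⊔ V) (hdisj : Disjoint H₂ V) :
    ∃ v ∈ V, v ∈ Subgroup.centralizer ((H₁ ⊓ H₂ : Subgroup G) : Set G) ∧
      MulAut.conj v • H₁ = H₂ := by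
  obtain ⟨M, hM⟩ := exists_monoidHom_mk_eq_iff hsup hdisj
  have hMV (h : H₁) : (M h : G) * (h : G)⁻¹ ∈ V := by
    rw [← QuotientGroup.eq_one_iff, QuotientGroup.mk_mul, QuotientGroup.mk_inv, mul_inv_eq_one]
    exact (hM h _).2 rfl
  -- `h ↦ M h * h⁻¹` is a 1-cocycle for the conjugation action of `H₁` on `V`
  obtain ⟨⟨v, hvV⟩, hv⟩ := exists_eq_inv_map_mul_of_cocycle₁
    (fun h : H₁ => (MulAut.conjNormal (h : G)).toMonoidHom) hV (f := fun h => ⟨_, hMV h⟩)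
    fun g h => by
      rw [mul_comm]
      ext
      simp only [Subgroup.coe_mul, map_mul, MulEquiv.coe_toMonoidHom, MulAut.conjNormal_apply]
      group
  have hMv (h : H₁) : (M h : G) = v * h * v⁻¹ := by
    have := congrArg Subtype.val ((hv h).trans (mul_comm _ _))
    simp only [Subgroup.coe_mul, Subgroup.coe_inv, MulEquiv.coe_toMonoidHom,
      MulAut.conjNormal_apply, mul_inv_eq_iff_eq_mul] at this
    rw [this]
    group
  refine ⟨v, hvV, Subgroup.mem_centralizer_iff.2 fun k hk => ?_, le_antisymm ?_ fun m hm => ?_⟩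
  · have hk' : k = v * k * v⁻¹ := by
      simpa only [(hM ⟨k, hk.1⟩ ⟨k, hk.2⟩).1 rfl] using hMv ⟨k, hk.1⟩
    calc k * v = v * k * v⁻¹ * v := by rw [← hk']
      _ = v * k := by group
  · rintro _ ⟨h, hh, rfl⟩
    show v * h * v⁻¹ ∈ H₂
    exact hMv ⟨h, hh⟩ ▸ (M ⟨h, hh⟩).2
  · have hm' : m ∈ H₁ ⊔ V := by rw [hsup]; exact Subgroup.mem_sup_left hm
    obtain ⟨h, hh, u, hu, rfl⟩ := Subgroup.mem_sup_of_normal_right.1 hm'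
    refine ⟨h, hh, (hMv ⟨h, hh⟩).symm.trans (congrArg Subtype.val ((hM _ ⟨_, hm⟩).1 ?_))⟩
    rw [QuotientGroup.mk_mul, (QuotientGroup.eq_one_iff u).2 hu, mul_one]

theorem exists_conj_smul_le_of_isComplement' [IsMulCommutative V] {H K : Subgroup G}
    (hH : H.IsComplement' V) [Finite K] (hV : Function.Bijective fun v : V => v ^ Nat.card K) :
    ∃ v ∈ V, MulAut.conj v • K ≤ H := by
  have hsup : K ⊔ V = H ⊓ (K ⊔ V) ⊔ V := by
    refine le_antisymm (sup_le (fun k hk => ?_) le_sup_right) (sup_le inf_le_right le_sup_right)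
    obtain ⟨h, hh, u, hu, rfl⟩ :=
      Subgroup.mem_sup_of_normal_right.1 (hH.sup_eq_top ▸ Subgroup.mem_top k)
    refine Subgroup.mul_mem_sup ⟨hh, ?_⟩ hu
    simpa using (K ⊔ V).mul_mem (Subgroup.mem_sup_left hk) (Subgroup.mem_sup_right (V.inv_mem hu))
  obtain ⟨v, hv, -, hconj⟩ :=
    exists_mem_centralizer_conj_smul_eq hV hsup (hH.disjoint.mono_left inf_le_left)
  exact ⟨v, hv, hconj.le.trans inf_le_left⟩

theorem mem_centralizer_of_pow_mem_centralizer {n : ℕ}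
    (hV : Function.Injective fun v : V => v ^ n) {w : G} (hw : w ∈ V) {S : Set G}
    (h : w ^ n ∈ Subgroup.centralizer S) : w ∈ Subgroup.centralizer S := by
  rw [Subgroup.mem_centralizer_iff] at h ⊢
  intro s hs
  have hconj : s * w * s⁻¹ = w := congrArg Subtype.val <|
    @hV ⟨_, Subgroup.Normal.conj_mem inferInstance w hw s⟩ ⟨w, hw⟩ <| Subtype.ext <| by
      simp [conj_pow, h s hs]
  calc s * w = s * w * s⁻¹ * s := by group
    _ = w * s := by rw [hconj]

end Complement

section Norm

variable {G : Type*} [Group G] {T : Subgroup G} [T.Normal] [IsMulCommutative T]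

theorem inv_mul_conj_eq_of_inv_mul_mem {a b z : G} (hab : a⁻¹ * b ∈ T) (hz : z ∈ T) :
    b⁻¹ * z * b = a⁻¹ * z * a := by
  have hcomm : a⁻¹ * z * a * (a⁻¹ * b) = a⁻¹ * b * (a⁻¹ * z * a) := congrArg Subtype.val
    (mul_comm' (⟨_, Subgroup.Normal.conj_mem' inferInstance z hz a⟩ : T) ⟨_, hab⟩)
  calc b⁻¹ * z * b = (a⁻¹ * b)⁻¹ * (a⁻¹ * z * a * (a⁻¹ * b)) := by group
    _ = a⁻¹ * z * a := by rw [hcomm]; group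

/-- The witness is the norm `∏_{γ ∈ Q/(Q ∩ T)} γ⁻¹ z γ`. -/
theorem exists_mem_centralizer_map_eq_pow {Q : Subgroup G} [Finite (Q ⧸ T.subgroupOf Q)]
    {H : Type*} [Group H] (f : G →* H) {z : G} (hz : z ∈ T)
    (hfz : ∀ q ∈ Q, Commute (f q) (f z)) :
    ∃ y ∈ Subgroup.centralizer (Q : Set G), f y = f z ^ Nat.card (Q ⧸ T.subgroupOf Q) := by
  have := Fintype.ofFinite (Q ⧸ T.subgroupOf Q)
  let c (γ : Q ⧸ T.subgroupOf Q) : T := MulAut.conjNormal ((γ.out : Q) : G)⁻¹ ⟨z, hz⟩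
  have hc (γ : Q ⧸ T.subgroupOf Q) (q : Q) :
      c (γ * q) = MulAut.conjNormal (q : G)⁻¹ (c γ) := by
    have hmem : (γ.out * q)⁻¹ * (γ * q).out ∈ T.subgroupOf Q := by
      rw [← QuotientGroup.eq, QuotientGroup.mk_mul, QuotientGroup.out_eq', QuotientGroup.out_eq']
    ext
    simp only [c, MulAut.conjNormal_apply, inv_inv]
    rw [inv_mul_conj_eq_of_inv_mul_mem (a := ((γ.out * q : Q) : G)) hmem hz]
    simp only [Subgroup.coe_mul]
    group
  refine ⟨((∏ γ, c γ : T) : G), Subgroup.mem_centralizer_iff.2 fun q hq => ?_, ?_⟩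
  · have hfix : MulAut.conjNormal q⁻¹ (∏ γ, c γ) = ∏ γ, c γ := by
      rw [map_prod]
      simp only [← hc _ ⟨q, hq⟩]
      exact Equiv.prod_comp (Equiv.mulRight _) c
    have := congrArg Subtype.val hfix
    rw [MulAut.conjNormal_apply, inv_inv] at this
    calc q * _ = q * (q⁻¹ * (∏ γ, c γ : T) * q) := by rw [this]
      _ = _ := by group
  · have hker : ∏ γ, c γ * (⟨z, hz⟩ : T)⁻¹ ∈ (f.comp T.subtype).ker :=
      Subgroup.prod_mem _ fun γ _ => by
        simp [c, MonoidHom.mem_ker, ((hfz _ (γ.out).2).inv_left).eq]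
    rw [Finset.prod_mul_distrib, Finset.prod_const, Finset.card_univ, MonoidHom.mem_ker,
      map_mul, inv_pow, map_inv, mul_inv_eq_one] at hker
    simpa [Nat.card_eq_fintype_card] using hker

end Norm

section PrimaryComponent

theorem CommGroup.surjective_pow_primaryComponent {C : Type*} [CommGroup C] {p : ℕ}
    (h : Function.Surjective fun c : C => c ^ p) :
    Function.Surjective fun c : CommGroup.primaryComponent C p => c ^ p := by
  rintro ⟨c, k, hk⟩
  obtain ⟨d, rfl⟩ := h c
  exact ⟨⟨d, k + 1, by rw [pow_succ', pow_mul, hk]⟩, rfl⟩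

def CommGroup.primaryComponentCongr {A B : Type*} [CommGroup A] [CommGroup B] (p : ℕ)
    (e : A ≃* B) : CommGroup.primaryComponent A p ≃* CommGroup.primaryComponent B p where
  __ := e.toEquiv.subtypeEquiv fun a => by
    simp only [CommGroup.mem_primaryComponent, MulEquiv.toEquiv_eq_coe, EquivLike.coe_coe,
      ← map_pow, MulEquiv.map_eq_one_iff]
  map_mul' x y := Subtype.ext (map_mul e x.1 y.1)

def CommGroup.primaryComponentPiEquiv (ι C : Type*) [Finite ι] [CommGroup C] (p : ℕ) :
    CommGroup.primaryComponent (ι → C) p ≃* (ι → CommGroup.primaryComponent C p) where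
  toFun x i := ⟨x.1 i, x.2.imp fun _ hk => congrFun hk i⟩
  invFun y := ⟨fun i => y i, by
    have : ∀ᶠ k in Filter.atTop, ∀ i, (y i : C) ^ p ^ k = 1 :=
      Filter.eventually_all.2 fun i => by
        obtain ⟨k, hk⟩ := (y i).2
        exact Filter.eventually_atTop.2 ⟨k, fun m hm => orderOf_dvd_iff_pow_eq_one.1
          ((orderOf_dvd_of_pow_eq_one hk).trans (pow_dvd_pow p hm))⟩
    exact this.exists.imp fun _ hk => funext hk⟩
  left_inv _ := rfl
  right_inv _ := rfl
  map_mul' _ _ := rfl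

theorem Circle.surjective_pow {n : ℕ} (hn : n ≠ 0) :
    Function.Surjective fun z : Circle => z ^ n := by
  intro z
  obtain ⟨t, rfl⟩ := Circle.exp_surjective z
  exact ⟨Circle.exp (t / n), by
    simp only [← Circle.exp_natCast_mul, mul_div_cancel₀ t (Nat.cast_ne_zero.2 hn : (n : ℝ) ≠ 0)]⟩

theorem MulEquiv.surjective_pow {A B : Type*} [Monoid A] [Monoid B] (e : A ≃* B) {n : ℕ}
    (h : Function.Surjective fun b : B => b ^ n) : Function.Surjective fun a : A => a ^ n :=
  fun a => let ⟨b, hb⟩ := h (e a); ⟨e.symm b, e.injective (by simpa [map_pow] using hb)⟩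

-- `PruferGroup p` is by definition `CommGroup.primaryComponent Circle p`.
theorem isPGroup_pruferTorus (p r : ℕ) : IsPGroup p (Fin r → PruferGroup p) :=
  (CommGroup.primaryComponent.isPGroup).of_equiv (CommGroup.primaryComponentPiEquiv _ _ p)

theorem surjective_pow_pruferTorus (p : ℕ) [Fact p.Prime] (r : ℕ) :
    Function.Surjective fun x : Fin r → PruferGroup p => x ^ p :=
  Function.Surjective.piMap fun _ =>
    CommGroup.surjective_pow_primaryComponent (Circle.surjective_pow (Fact.out : p.Prime).ne_zero)

end PrimaryComponent

section Extension

variable {G : Type*} [Group G] (T : Subgroup G) [IsMulCommutative T]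

def Subgroup.primaryComponent (p : ℕ) : Subgroup G :=
  (CommGroup.primaryComponent T p).map T.subtype

variable {T} {p : ℕ}

theorem Subgroup.mem_primaryComponent {x : G} :
    x ∈ T.primaryComponent p ↔ x ∈ T ∧ ∃ k : ℕ, x ^ p ^ k = 1 := by
  constructor
  · rintro ⟨y, ⟨k, hk⟩, rfl⟩
    exact ⟨y.2, k, by simpa using congrArg Subtype.val hk⟩
  · rintro ⟨hx, k, hk⟩
    exact ⟨⟨x, hx⟩, ⟨k, Subtype.ext (by simpa using hk)⟩, rfl⟩

theorem Subgroup.primaryComponent_le : T.primaryComponent p ≤ T := fun _ hx =>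
  (Subgroup.mem_primaryComponent.1 hx).1

def Subgroup.primaryComponentEquiv {r : ℕ} (e : T ≃* (Fin r → Circle)) :
    T.primaryComponent p ≃* (Fin r → PruferGroup p) :=
  (Subgroup.equivMapOfInjective _ _ T.subtype_injective).symm.trans
    ((CommGroup.primaryComponentCongr p e).trans (CommGroup.primaryComponentPiEquiv _ _ p))

variable [T.Normal]

instance : (T.primaryComponent p).Normal where
  conj_mem x hx g := by
    obtain ⟨hxT, k, hk⟩ := Subgroup.mem_primaryComponent.1 hx
    exact Subgroup.mem_primaryComponent.2 ⟨Subgroup.Normal.conj_mem inferInstance x hxT g, k,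
      by rw [conj_pow, hk, mul_one, mul_inv_cancel]⟩

theorem bijective_pow_map_mk (hT : Function.Surjective fun t : T => t ^ p) :
    Function.Bijective fun v : T.map (QuotientGroup.mk' (T.primaryComponent p)) => v ^ p := by
  refine ⟨(injective_iff_map_eq_one
    (powMonoidHom (α := T.map (QuotientGroup.mk' (T.primaryComponent p))) p)).2 ?_, ?_⟩
  · rintro ⟨_, t, ht, rfl⟩ h
    obtain ⟨-, k, hk⟩ := Subgroup.mem_primaryComponent.1
      ((QuotientGroup.eq_one_iff _).1 (congrArg Subtype.val h))
    refine Subtype.ext ((QuotientGroup.eq_one_iff _).2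
      (Subgroup.mem_primaryComponent.2 ⟨ht, k + 1, ?_⟩))
    rwa [pow_succ', pow_mul]
  · rintro ⟨_, t, ht, rfl⟩
    obtain ⟨s, hs⟩ := hT ⟨t, ht⟩
    obtain rfl : (s : G) ^ p = t := congrArg Subtype.val hs
    exact ⟨⟨_, s, s.2, rfl⟩, Subtype.ext (QuotientGroup.mk_pow _ _ _).symm⟩

theorem isPGroup_quotient_map_mk (hG : IsPGroup p (G ⧸ T)) :
    IsPGroup p ((G ⧸ T.primaryComponent p) ⧸ T.map (QuotientGroup.mk' (T.primaryComponent p))) :=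
  hG.of_equiv (QuotientGroup.quotientQuotientEquivQuotient _ _ Subgroup.primaryComponent_le).symm

theorem isDiscretePToral_comap_mk {r : ℕ} (hT : IsDiscretePTorusOfRank p r (T.primaryComponent p))
    (K : Subgroup (G ⧸ T.primaryComponent p)) [Finite K] (hK : IsPGroup p K) :
    IsDiscretePToral p (K.comap (QuotientGroup.mk' (T.primaryComponent p))) := by
  obtain ⟨η⟩ := hT
  have hle : T.primaryComponent p ≤ K.comap (QuotientGroup.mk' (T.primaryComponent p)) :=
    fun x hx => by
      rw [Subgroup.mem_comap, QuotientGroup.mk'_apply, (QuotientGroup.eq_one_iff x).2 hx]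
      exact K.one_mem
  let e := (QuotientGroup.subgroupOfEquivMapMk (T.primaryComponent p) _).trans
    (MulEquiv.subgroupCongr (Subgroup.map_comap_eq_self_of_surjective
      (QuotientGroup.mk'_surjective (T.primaryComponent p)) K))
  exact ⟨r, _, inferInstance, ⟨(Subgroup.subgroupOfEquivOfLe hle).trans η⟩,
    Finite.of_equiv _ e.symm.toEquiv, hK.of_equiv e.symm⟩

variable [Finite (G ⧸ T)]

instance : Finite ((G ⧸ T.primaryComponent p) ⧸ T.map (QuotientGroup.mk' (T.primaryComponent p))) :=
  Finite.of_equiv _ (QuotientGroup.quotientQuotientEquivQuotient _ _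
    Subgroup.primaryComponent_le).symm.toEquiv

variable [Fact p.Prime]

theorem range_le_primaryComponent (hG : IsPGroup p (G ⧸ T)) {D : Type*} [Group D]
    (hD : IsPGroup p D) (hdiv : Function.Surjective fun d : D => d ^ p) (f : D →* G) :
    f.range ≤ T.primaryComponent p := by
  rintro _ ⟨d, rfl⟩
  obtain ⟨k, hk⟩ := IsPGroup.iff_card.1 hG
  obtain ⟨b, rfl⟩ : ∃ b, b ^ p ^ k = d := by
    simpa only [pow_iterate] using hdiv.iterate k d
  obtain ⟨m, hm⟩ := hD b
  refine Subgroup.mem_primaryComponent.2 ⟨?_, m, ?_⟩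
  · rw [← QuotientGroup.eq_one_iff, map_pow, QuotientGroup.mk_pow, ← hk, pow_card_eq_one']
  · rw [← map_pow, ← pow_mul, mul_comm, pow_mul, hm, one_pow, map_one]

theorem finite_and_isPGroup_map_mk_of_isDiscretePToral (hG : IsPGroup p (G ⧸ T))
    {P : Subgroup G} (hP : IsDiscretePToral p P) :
    Finite (P.map (QuotientGroup.mk' (T.primaryComponent p))) ∧
      IsPGroup p (P.map (QuotientGroup.mk' (T.primaryComponent p))) := by
  obtain ⟨r, D, hD, ⟨η⟩, hfin, hpD⟩ := hP
  have hle : D ≤ ((QuotientGroup.mk' (T.primaryComponent p)).subgroupMap P).ker := fun x hx => by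
    rw [Subgroup.ker_subgroupMap, QuotientGroup.ker_mk', Subgroup.mem_subgroupOf]
    refine range_le_primaryComponent hG (isPGroup_pruferTorus p r) (surjective_pow_pruferTorus p r)
      (P.subtype.comp (D.subtype.comp η.symm.toMonoidHom)) ⟨η ⟨x, hx⟩, ?_⟩
    simp
  have hsurj := QuotientGroup.lift_surjective_of_surjective _ _
    ((QuotientGroup.mk' (T.primaryComponent p)).subgroupMap_surjective P) hle
  exact ⟨Finite.of_surjective _ hsurj, hpD.of_surjective _ hsurj⟩

theorem IsMaxDiscretePToral.comap_map_mk {r : ℕ}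
    (hT : IsDiscretePTorusOfRank p r (T.primaryComponent p)) (hG : IsPGroup p (G ⧸ T))
    {P : Subgroup G} (hP : IsMaxDiscretePToral p P) :
    (P.map (QuotientGroup.mk' (T.primaryComponent p))).comap
      (QuotientGroup.mk' (T.primaryComponent p)) = P := by
  obtain ⟨_, hpP⟩ := finite_and_isPGroup_map_mk_of_isDiscretePToral hG hP.2.1
  exact hP.2.2 _ le_top (isDiscretePToral_comap_mk hT _ hpP) (Subgroup.le_comap_map _ _)

theorem IsMaxDiscretePToral.map_mk_sup_eq_top {r : ℕ}
    (hT : IsDiscretePTorusOfRank p r (T.primaryComponent p)) (hG : IsPGroup p (G ⧸ T))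
    (hV : Function.Bijective fun v : T.map (QuotientGroup.mk' (T.primaryComponent p)) => v ^ p)
    {H : Subgroup (G ⧸ T.primaryComponent p)}
    (hH : H.IsComplement' (T.map (QuotientGroup.mk' (T.primaryComponent p))))
    {P : Subgroup G} (hP : IsMaxDiscretePToral p P) :
    P.map (QuotientGroup.mk' (T.primaryComponent p)) ⊔
      T.map (QuotientGroup.mk' (T.primaryComponent p)) = ⊤ := by
  obtain ⟨hfin, hpP⟩ := finite_and_isPGroup_map_mk_of_isDiscretePToral hG hP.2.1
  obtain ⟨v, -, hle⟩ :=
    exists_conj_smul_le_of_isComplement' hH (bijective_pow_card_of_isPGroup hV hpP)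
  have : Finite ↥(MulAut.conj v⁻¹ • H : Subgroup _) :=
    Finite.of_equiv _ (hH.QuotientMulEquiv.trans (Subgroup.equivSMul _ H)).toEquiv
  have hH'p : IsPGroup p ↥(MulAut.conj v⁻¹ • H : Subgroup _) :=
    (isPGroup_quotient_map_mk hG).of_equiv (hH.QuotientMulEquiv.trans (Subgroup.equivSMul _ H))
  have hPH : P.map (QuotientGroup.mk' (T.primaryComponent p)) ≤ MulAut.conj v⁻¹ • H := by
    rwa [Subgroup.subset_pointwise_smul_iff, ← map_inv, inv_inv]
  have hsurj := QuotientGroup.mk'_surjective (T.primaryComponent p)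
  have hcomap : (MulAut.conj v⁻¹ • H).comap (QuotientGroup.mk' (T.primaryComponent p)) = P :=
    hP.2.2 _ le_top (isDiscretePToral_comap_mk hT _ hH'p) (Subgroup.map_le_iff_le_comap.1 hPH)
  rw [← hcomap, Subgroup.map_comap_eq_self_of_surjective hsurj,
    ← Subgroup.Normal.conj_smul_eq_self v⁻¹ (T.map _), ← Subgroup.smul_sup, hH.sup_eq_top,
    Subgroup.Normal.conj_smul_eq_self]

theorem exists_mem_centralizer_map_mk_eq (hG : IsPGroup p (G ⧸ T))
    (hV : Function.Bijective fun v : T.map (QuotientGroup.mk' (T.primaryComponent p)) => v ^ p)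
    {Q : Subgroup G} {v : G ⧸ T.primaryComponent p}
    (hv : v ∈ T.map (QuotientGroup.mk' (T.primaryComponent p)))
    (hvQ : v ∈ Subgroup.centralizer (Q.map (QuotientGroup.mk' (T.primaryComponent p)) : Set _)) :
    ∃ y ∈ Subgroup.centralizer (Q : Set G), QuotientGroup.mk' (T.primaryComponent p) y = v := by
  let e := QuotientGroup.subgroupOfEquivMapMk T Q
  have : Finite (Q ⧸ T.subgroupOf Q) := Finite.of_equiv _ e.symm.toEquiv
  have hn := bijective_pow_card_of_isPGroup hV ((hG.to_subgroup _).of_equiv e.symm)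
  obtain ⟨⟨w, hwV⟩, hw⟩ := hn.2 ⟨v, hv⟩
  have hw' : w ^ Nat.card (Q ⧸ T.subgroupOf Q) = v := congrArg Subtype.val hw
  have hwQ := mem_centralizer_of_pow_mem_centralizer hn.1 hwV (hw' ▸ hvQ)
  obtain ⟨z, hz, rfl⟩ := hwV
  obtain ⟨y, hy, hyz⟩ := exists_mem_centralizer_map_eq_pow
    (QuotientGroup.mk' (T.primaryComponent p)) hz
    fun q hq => Subgroup.mem_centralizer_iff.1 hwQ _ (Subgroup.mem_map_of_mem _ hq)
  exact ⟨y, hy, hyz.trans hw'⟩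

theorem exists_mem_centralizer_conjSubgroup_eq (hdiv : Function.Surjective fun t : T => t ^ p)
    {r : ℕ} (hT : IsDiscretePTorusOfRank p r (T.primaryComponent p)) (hG : IsPGroup p (G ⧸ T))
    {P₁ P₂ Q : Subgroup G} (h₁ : IsMaxDiscretePToral p P₁) (h₂ : IsMaxDiscretePToral p P₂)
    (hQ : Q ≤ P₁ ⊓ P₂) : ∃ y ∈ Subgroup.centralizer (Q : Set G), conjSubgroup y P₁ = P₂ := by
  have hV := bijective_pow_map_mk hdiv
  obtain ⟨H, hH⟩ := exists_isComplement'_of_bijective_pow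
    (bijective_pow_card_of_isPGroup hV (isPGroup_quotient_map_mk hG))
  obtain ⟨_, hp₁⟩ := finite_and_isPGroup_map_mk_of_isDiscretePToral hG h₁.2.1
  obtain ⟨v, hvV, hvQ, hv⟩ := exists_mem_centralizer_conj_smul_eq
    (bijective_pow_card_of_isPGroup hV hp₁)
    ((h₁.map_mk_sup_eq_top hT hG hV hH).trans (h₂.map_mk_sup_eq_top hT hG hV hH).symm)
    ((finite_and_isPGroup_map_mk_of_isDiscretePToral hG h₂.2.1).2.disjoint_of_injective_pow hV.1)
  obtain ⟨y, hyQ, hy⟩ := exists_mem_centralizer_map_mk_eq hG hV (inv_mem hvV)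
    (inv_mem (Subgroup.centralizer_le
      ((Subgroup.map_mono hQ).trans (Subgroup.map_inf_le _ _ _)) hvQ))
  refine ⟨y, hyQ, ?_⟩
  calc conjSubgroup y P₁
        = MulAut.conj y⁻¹ • (P₁.map (QuotientGroup.mk' _)).comap (QuotientGroup.mk' _) := by
        rw [h₁.comap_map_mk hT hG, conjSubgroup_eq_smul]
    _ = (MulAut.conj v • P₁.map (QuotientGroup.mk' _)).comap (QuotientGroup.mk' _) := by
        rw [← Subgroup.comap_conj_smul, map_inv, hy, inv_inv]
    _ = P₂ := by rw [hv, h₂.comap_map_mk hT hG]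

end Extension

/-- Let `𝐏` be a `p`-toral group with `p`-discretizations `P₁, P₂`, and
let `Q ⊆ P₁ ∩ P₂` be a subgroup.  Then there exists `y ∈ C_𝐏(Q)` with `c_y(P₁) = P₂`; in
particular the pair `(Q, P₁)` is conjugate in `𝐏` to `(Q, P₂)` by an element fixing `Q`
pointwise. -/
theorem uniqueness_of_relative_pDiscretizations (p : ℕ) [Fact p.Prime]
    (Pbold : Type*) [Group Pbold] [TopologicalSpace Pbold] [IsTopologicalGroup Pbold]
    (hPbold : IsPToral p Pbold)
    (P₁ P₂ : Subgroup Pbold)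
    (h₁ : IsMaxDiscretePToral p P₁) (h₂ : IsMaxDiscretePToral p P₂)
    (Q : Subgroup Pbold) (hQ : Q ≤ P₁ ⊓ P₂) :
    ∃ y : Pbold, y ∈ Subgroup.centralizer (Q : Set Pbold) ∧ conjSubgroup y P₁ = P₂ := by
  obtain ⟨-, r, ⟨e, -, -⟩, hN, hfin, hp⟩ := hPbold
  have : IsMulCommutative (Subgroup.connectedComponentOfOne Pbold) :=
    isMulCommutative_iff.2 fun a b => e.injective (by rw [map_mul, map_mul, mul_comm])
  exact exists_mem_centralizer_conjSubgroup_eq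
    (e.surjective_pow (Function.Surjective.piMap fun _ =>
      Circle.surjective_pow (Fact.out : p.Prime).ne_zero))
    ⟨Subgroup.primaryComponentEquiv e⟩ hp h₁ h₂ hQ

end
end
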